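/- (Theorem 1.) Let Q = diag(q_1,…,q_n) with q_i > 0 and suppose there exist indices i, j with q_i ≠ q_j. Let B ∈ ℝ^{n×m} with ker(Bᵀ) = span{𝟙} (incidence matrix of a connected physical graph), let B_c ∈ ℝ^{n×m_c} with ker(B_cᵀ) = span{𝟙} and set L_c := B_c B_cᵀ (Laplacian of a connected communication graph). Let γ_c, γ_e, γ_p, γ_l > 0, d, r, x̄_0, x̄_s ∈ ℝ^n, x̄(t) := x̄_0 + x̄_s t, and let x, x_p : [0,∞) → ℝ^n, x_e : [0,∞) → ℝ^m be differentiable functions satisfying for all t ≥ 0 the closed-loop equations ẋ = −γ_c B Bᵀ(x − x̄(t)) − γ_e B x_e + Q^{-1}(γ_p x_p − r) + d, ẋ_p = −γ_l L_c x_p − γ_p Q^{-1}(x − x̄(t)), ẋ_e = γ_e Bᵀ(x − x̄(t)). Then lim_{t→∞} ‖x(t) − x̄(t)‖ = 0 and lim_{t→∞} ‖u_p(t) − ū_p‖ = 0, where u_p(t) := Q^{-1}(γ_p x_p(t) − r) and ū_p := −Q^{-1}( (𝟙𝟙ᵀ/(𝟙ᵀQ^{-1}𝟙))(d − x̄_s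 − Q^{-1}r) + r ). -/

import Mathlib

open Matrix Filter

/-- Euclidean norm on `Fin k → ℝ`. -/
noncomputable def euclNorm {k : ℕ} (v : Fin k → ℝ) : ℝ :=
  ‖(WithLp.equiv 2 (Fin k → ℝ)).symm v‖

/-- Operator norm on matrices induced by the Euclidean norms. -/
noncomputable def matOpNorm {k l : ℕ} (A : Matrix (Fin k) (Fin l) ℝ) : ℝ :=
  ‖LinearMap.toContinuousLinearMap (Matrix.toEuclideanLin A)‖

/-- The all-ones vector `𝟙`. -/
def onesVec (k : ℕ) : Fin k → ℝ := fun _ => 1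

/-- The all-ones matrix `𝟙𝟙ᵀ`. -/
def onesMat (k : ℕ) : Matrix (Fin k) (Fin k) ℝ := Matrix.of fun _ _ => 1

/-- Scalar saturation: `sat(y; l, u) = l` if `y ≤ l`, `u` if `u ≤ y`, and `y` otherwise. -/
noncomputable def sat1 (y l u : ℝ) : ℝ := if y ≤ l then l else if u ≤ y then u else y

/-- Componentwise (multidimensional) saturation function. -/
noncomputable def satv {k : ℕ} (x xm xp : Fin k → ℝ) : Fin k → ℝ :=
  fun i => sat1 (x i) (xm i) (xp i)

/-!
Shift to error coordinates `y = x - x̄`, `z = x_p - x̄_p`, `w = x_e - x̄_e` around a steady state.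
It exists because `range B = 𝟙ᗮ` and `ū_p` is exactly the input that makes the constant forcing
`ū_p + d - x̄_s` orthogonal to `𝟙`. The energy `|y|² + |z|² + |w|²` decreases at rate
`2γ_c |Bᵀy|² + 2γ_l |B_cᵀz|²`, so the trajectory is bounded and Barbalat's lemma gives
`Bᵀy → 0` and `B_cᵀz → 0`. Barbalat's lemma for `B_cᵀz` then gives `B_cᵀQ⁻¹y → 0`, which forces
`y → 0` because `Q⁻¹𝟙` is not parallel to `𝟙`; for `y` it gives `ẏ → 0`, whose component along
`𝟙` is `γ_p 𝟙ᵀQ⁻¹z`, and this forces `z → 0`.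
-/

open Set Topology

/-- Barbalat's lemma. -/
theorem tendsto_deriv_zero_of_uniformContinuousOn {E : Type*} [NormedAddCommGroup E]
    [NormedSpace ℝ E] {f f' : ℝ → E} {a : E} (hf : ∀ t ≥ (0 : ℝ), HasDerivAt f (f' t) t)
    (hf' : UniformContinuousOn f' (Ici 0)) (hlim : Tendsto f atTop (𝓝 a)) :
    Tendsto f' atTop (𝓝 0) := by
  rw [Metric.tendsto_atTop]
  intro ε hε
  obtain ⟨δ, hδ, hf'δ⟩ := Metric.uniformContinuousOn_iff_le.1 hf' (ε / 3) (by positivity)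
  obtain ⟨N, hN⟩ := Metric.tendsto_atTop.1 hlim (ε * δ / 3) (by positivity)
  refine ⟨max N 0, fun t ht => ?_⟩
  have ht0 : 0 ≤ t := le_of_max_le_right ht
  have htN : N ≤ t := le_of_max_le_left ht
  -- the mean value inequality for `s ↦ f s - (s - t) • f' t` on `[t, t + δ]`
  have hmvt : ‖f (t + δ) - f t - δ • f' t‖ ≤ ε / 3 * δ := by
    have := norm_image_sub_le_of_norm_deriv_le_segment' (f := fun s => f s - (s - t) • f' t)
      (f' := fun s => f' s - f' t) (C := ε / 3)
      (fun s hs => (((hf s (ht0.trans hs.1)).sub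
        (((hasDerivAt_id s).sub_const t).smul_const (f' t))).congr_deriv
        (by simp)).hasDerivWithinAt)
      (fun s hs => by
        rw [← dist_eq_norm]
        exact hf'δ s (ht0.trans hs.1) t ht0 (by
          rw [Real.dist_eq, abs_of_nonneg (by linarith [hs.1])]; linarith [hs.2]))
      (t + δ) ⟨by linarith, le_rfl⟩
    simpa [sub_sub, add_comm] using this
  have hfδ : ‖f (t + δ) - f t‖ < 2 * (ε * δ / 3) := by
    have h1 := hN (t + δ) (by linarith)
    have h2 := hN t htN
    rw [dist_eq_norm] at h1 h2
    calc ‖f (t + δ) - f t‖ = ‖(f (t + δ) - a) - (f t - a)‖ := by congr 1; abel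
      _ ≤ ‖f (t + δ) - a‖ + ‖f t - a‖ := norm_sub_le _ _
      _ < 2 * (ε * δ / 3) := by linarith
  have hδf' : δ * ‖f' t‖ < δ * ε := by
    calc δ * ‖f' t‖ = ‖δ • f' t‖ := by rw [norm_smul, Real.norm_of_nonneg hδ.le]
      _ ≤ ‖f (t + δ) - f t‖ + ‖f (t + δ) - f t - δ • f' t‖ := by
        simpa using norm_sub_le (f (t + δ) - f t) (f (t + δ) - f t - δ • f' t)
      _ < δ * ε := by linarith
  rw [dist_zero_right]
  exact lt_of_mul_lt_mul_left hδf' hδ.le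

theorem uniformContinuousOn_comp_of_hasDerivAt {E F : Type*} [NormedAddCommGroup E]
    [NormedSpace ℝ E] [UniformSpace F] {s : ℝ → E} {Φ : E → E} {g : E → F} {K : Set E}
    (hK : IsCompact K) (hsK : ∀ t ≥ (0 : ℝ), s t ∈ K) (hΦ : ContinuousOn Φ K)
    (hs : ∀ t ≥ (0 : ℝ), HasDerivAt s (Φ (s t)) t) (hg : ContinuousOn g K) :
    UniformContinuousOn (fun t => g (s t)) (Ici 0) := by
  obtain ⟨C, hC⟩ := hK.exists_bound_of_continuousOn hΦ
  have hlip : LipschitzOnWith (Real.toNNReal C) s (Ici 0) :=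
    (convex_Ici 0).lipschitzOnWith_of_nnnorm_hasDerivWithin_le
      (fun t ht => (hs t ht).hasDerivWithinAt)
      (fun t ht => by
        rw [← NNReal.coe_le_coe, coe_nnnorm]
        exact (hC _ (hsK t ht)).trans (Real.le_coe_toNNReal C))
  exact (hK.uniformContinuousOn_of_continuous hg).comp hlip.uniformContinuousOn
    (fun t ht => hsK t ht)

theorem AntitoneOn.exists_tendsto_atTop {f : ℝ → ℝ} {a b : ℝ} (hf : AntitoneOn f (Ici a))
    (hb : ∀ t ≥ a, b ≤ f t) : ∃ L, Tendsto f atTop (𝓝 L) := by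
  have hanti : Antitone fun t => f (max t a) := fun _ _ hst =>
    hf (le_max_right _ a) (le_max_right _ a) (max_le_max_right a hst)
  refine ⟨_, (tendsto_atTop_ciInf hanti ⟨b, ?_⟩).congr' ?_⟩
  · rintro _ ⟨t, rfl⟩
    exact hb _ (le_max_right t a)
  · filter_upwards [eventually_ge_atTop a] with t ht
    rw [max_eq_left ht]

theorem tendsto_zero_of_disjoint_ker {α E F G : Type*} [NormedAddCommGroup E] [NormedSpace ℝ E]
    [FiniteDimensional ℝ E] [NormedAddCommGroup F] [NormedSpace ℝ F] [NormedAddCommGroup G]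
    [NormedSpace ℝ G] {L : E →ₗ[ℝ] F} {M : E →ₗ[ℝ] G}
    (hLM : Disjoint (LinearMap.ker L) (LinearMap.ker M)) {l : Filter α} {v : α → E}
    (hL : Tendsto (fun t => L (v t)) l (𝓝 0)) (hM : Tendsto (fun t => M (v t)) l (𝓝 0)) :
    Tendsto v l (𝓝 0) := by
  have hinj : Function.Injective (L.prod M) := by
    rw [← LinearMap.ker_eq_bot, LinearMap.ker_prod, ← disjoint_iff]
    exact hLM
  obtain ⟨K, -, hK⟩ := (L.prod M).injective_iff_antilipschitz.1 hinj
  have hLM0 : Tendsto (fun t => (K : ℝ) * ‖(L.prod M) (v t)‖) l (𝓝 0) := by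
    simpa using ((hL.prodMk_nhds hM).norm.const_mul (K : ℝ))
  refine squeeze_zero_norm (fun t => ?_) hLM0
  simpa only [map_zero, dist_zero_right] using hK.le_mul_dist (v t) 0

theorem LinearMap.disjoint_ker_of_ker_le_span {E F G : Type*} [AddCommGroup E] [Module ℝ E]
    [AddCommGroup F] [Module ℝ F] [AddCommGroup G] [Module ℝ G] {L : E →ₗ[ℝ] F}
    {M : E →ₗ[ℝ] G} {e : E} (hL : ker L ≤ Submodule.span ℝ {e}) (hM : M e ≠ 0) :
    Disjoint (ker L) (ker M) :=
  (Submodule.disjoint_span_singleton.2 fun he => absurd (mem_ker.1 he) hM).symm.mono_left hL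

theorem Matrix.exists_mulVec_eq_of_forall_dotProduct_eq_zero {m n : Type*} [Fintype m]
    [Fintype n] [DecidableEq m] [DecidableEq n] (B : Matrix n m ℝ) {v : n → ℝ}
    (hv : ∀ k, Bᵀ *ᵥ k = 0 → k ⬝ᵥ v = 0) : ∃ w, B *ᵥ w = v := by
  have hmem : WithLp.toLp 2 v ∈ (LinearMap.ker (toEuclideanLin Bᵀ))ᗮ := by
    rw [Submodule.mem_orthogonal]
    intro u hu
    rw [EuclideanSpace.inner_eq_star_dotProduct, star_trivial, dotProduct_comm]
    exact hv _ (congrArg WithLp.ofLp hu)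
  rw [LinearMap.orthogonal_ker, ← toEuclideanLin_conjTranspose_eq_adjoint,
    conjTranspose_eq_transpose_of_trivial, transpose_transpose] at hmem
  obtain ⟨w, hw⟩ := hmem
  exact ⟨WithLp.ofLp w, congrArg WithLp.ofLp hw⟩

theorem dotProduct_self_nonneg {n : Type*} [Fintype n] (v : n → ℝ) : 0 ≤ v ⬝ᵥ v :=
  Finset.sum_nonneg fun i _ => mul_self_nonneg (v i)

theorem dotProduct_mulVec_eq_transpose {m n : Type*} [Fintype m] [Fintype n]
    (A : Matrix m n ℝ) (u : m → ℝ) (v : n → ℝ) : u ⬝ᵥ (A *ᵥ v) = (Aᵀ *ᵥ u) ⬝ᵥ v := by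
  rw [dotProduct_mulVec, mulVec_transpose]

theorem norm_le_sqrt_dotProduct_self {n : Type*} [Fintype n] (v : n → ℝ) :
    ‖v‖ ≤ √(v ⬝ᵥ v) := by
  refine (pi_norm_le_iff_of_nonneg (Real.sqrt_nonneg _)).2 fun i => ?_
  rw [Real.norm_eq_abs]
  refine Real.abs_le_sqrt ?_
  rw [sq]
  exact Finset.single_le_sum (f := fun j => v j * v j) (fun j _ => mul_self_nonneg (v j))
    (Finset.mem_univ i)

theorem tendsto_zero_of_tendsto_dotProduct_self {α n : Type*} [Fintype n] {l : Filter α}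
    {v : α → n → ℝ} (hv : Tendsto (fun t => v t ⬝ᵥ v t) l (𝓝 0)) : Tendsto v l (𝓝 0) :=
  squeeze_zero_norm (fun t => norm_le_sqrt_dotProduct_self (v t))
    (by simpa [Function.comp_def] using (Real.continuous_sqrt.tendsto 0).comp hv)

theorem tendsto_mulVec_zero {α m n : Type*} [Fintype n] (A : Matrix m n ℝ) {l : Filter α}
    {f : α → n → ℝ} (hf : Tendsto f l (𝓝 0)) : Tendsto (fun t => A *ᵥ f t) l (𝓝 0) := by
  simpa [Function.comp_def] using
    ((continuous_const.matrix_mulVec continuous_id).tendsto 0).comp hf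

theorem tendsto_euclNorm_zero {α : Type*} {n : ℕ} {l : Filter α} {f : α → Fin n → ℝ}
    (hf : Tendsto f l (𝓝 0)) : Tendsto (fun t => euclNorm (f t)) l (𝓝 0) := by
  simpa [euclNorm, Function.comp_def] using
    (((PiLp.continuous_toLp 2 _).tendsto 0).comp hf).norm

theorem HasDerivAt.matrix_mulVec {m n : Type*} [Fintype m] [Fintype n] (A : Matrix m n ℝ)
    {f : ℝ → n → ℝ} {f' : n → ℝ} {t : ℝ} (hf : HasDerivAt f f' t) :
    HasDerivAt (fun s => A *ᵥ f s) (A *ᵥ f') t := by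
  simpa [Function.comp_def] using
    (LinearMap.toContinuousLinearMap A.mulVecLin).hasFDerivAt.comp_hasDerivAt t hf

theorem HasDerivAt.dotProduct {n : Type*} [Fintype n] {f g : ℝ → n → ℝ} {f' g' : n → ℝ}
    {t : ℝ} (hf : HasDerivAt f f' t) (hg : HasDerivAt g g' t) :
    HasDerivAt (fun s => f s ⬝ᵥ g s) (f' ⬝ᵥ g t + f t ⬝ᵥ g') t := by
  have := HasDerivAt.fun_sum fun i (_ : i ∈ Finset.univ) =>
    (hasDerivAt_pi.1 hf i).mul (hasDerivAt_pi.1 hg i)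
  simpa [_root_.dotProduct, Finset.sum_add_distrib] using this

theorem onesMat_mulVec {n : ℕ} (u : Fin n → ℝ) :
    onesMat n *ᵥ u = (onesVec n ⬝ᵥ u) • onesVec n := by
  ext i
  simp [onesMat, onesVec, mulVec, dotProduct]

theorem notMem_span_onesVec {n : ℕ} {v : Fin n → ℝ} {i j : Fin n} (hij : v i ≠ v j) :
    v ∉ Submodule.span ℝ {onesVec n} := by
  rintro hv
  obtain ⟨a, rfl⟩ := Submodule.mem_span_singleton.1 hv
  simp [onesVec] at hij

theorem onesVec_dotProduct_diagonal_mulVec_onesVec {n : ℕ} (v : Fin n → ℝ) :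
    onesVec n ⬝ᵥ (diagonal v *ᵥ onesVec n) = ∑ i, v i := by
  simp [onesVec, mulVec_diagonal, dotProduct]

structure IsErrorTrajectory {n m mc : ℕ} (B : Matrix (Fin n) (Fin m) ℝ)
    (Bc : Matrix (Fin n) (Fin mc) ℝ) (Qinv : Matrix (Fin n) (Fin n) ℝ) (γc γe γp γl : ℝ)
    (y z : ℝ → Fin n → ℝ) (w : ℝ → Fin m → ℝ) : Prop where
  hasDerivAt_y : ∀ t ≥ (0 : ℝ), HasDerivAt y
    (-(γc • ((B * Bᵀ) *ᵥ y t)) - γe • (B *ᵥ w t) + γp • (Qinv *ᵥ z t)) t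
  hasDerivAt_z : ∀ t ≥ (0 : ℝ), HasDerivAt z
    (-(γl • ((Bc * Bcᵀ) *ᵥ z t)) - γp • (Qinv *ᵥ y t)) t
  hasDerivAt_w : ∀ t ≥ (0 : ℝ), HasDerivAt w (γe • (Bᵀ *ᵥ y t)) t

def errorEnergy {n m : ℕ} (y z : ℝ → Fin n → ℝ) (w : ℝ → Fin m → ℝ) (t : ℝ) : ℝ :=
  y t ⬝ᵥ y t + z t ⬝ᵥ z t + w t ⬝ᵥ w t

namespace IsErrorTrajectory

variable {n m mc : ℕ} {B : Matrix (Fin n) (Fin m) ℝ} {Bc : Matrix (Fin n) (Fin mc) ℝ}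
  {Qinv : Matrix (Fin n) (Fin n) ℝ} {γc γe γp γl : ℝ} {y z : ℝ → Fin n → ℝ} {w : ℝ → Fin m → ℝ}

theorem hasDerivAt_errorEnergy (h : IsErrorTrajectory B Bc Qinv γc γe γp γl y z w)
    (hQ : Qinvᵀ = Qinv) (t : ℝ) (ht : 0 ≤ t) :
    HasDerivAt (errorEnergy y z w) (-(2 * γc * ((Bᵀ *ᵥ y t) ⬝ᵥ (Bᵀ *ᵥ y t))
      + 2 * γl * ((Bcᵀ *ᵥ z t) ⬝ᵥ (Bcᵀ *ᵥ z t)))) t := by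
  have hy := h.hasDerivAt_y t ht
  have hz := h.hasDerivAt_z t ht
  have hw := h.hasDerivAt_w t ht
  refine (((hy.dotProduct hy).add (hz.dotProduct hz)).add (hw.dotProduct hw)).congr_deriv ?_
  have hyBBy : y t ⬝ᵥ (B *ᵥ (Bᵀ *ᵥ y t)) = (Bᵀ *ᵥ y t) ⬝ᵥ (Bᵀ *ᵥ y t) :=
    dotProduct_mulVec_eq_transpose _ _ _
  have hzBBz : z t ⬝ᵥ (Bc *ᵥ (Bcᵀ *ᵥ z t)) = (Bcᵀ *ᵥ z t) ⬝ᵥ (Bcᵀ *ᵥ z t) :=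
    dotProduct_mulVec_eq_transpose _ _ _
  -- the coupling terms `γe ⟪y, B w⟫` and `γp ⟪y, Q⁻¹ z⟫` cancel in pairs
  have hyBw : y t ⬝ᵥ (B *ᵥ w t) = w t ⬝ᵥ (Bᵀ *ᵥ y t) := by
    rw [dotProduct_mulVec_eq_transpose, dotProduct_comm]
  have hzQy : z t ⬝ᵥ (Qinv *ᵥ y t) = y t ⬝ᵥ (Qinv *ᵥ z t) := by
    rw [dotProduct_mulVec_eq_transpose, hQ, dotProduct_comm]
  simp only [dotProduct_comm _ (y t), dotProduct_comm _ (z t), dotProduct_comm _ (w t),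
    dotProduct_add, dotProduct_sub, dotProduct_neg, dotProduct_smul, smul_eq_mul,
    ← mulVec_mulVec, hyBBy, hzBBz, hyBw, hzQy]
  ring

theorem antitoneOn_errorEnergy (h : IsErrorTrajectory B Bc Qinv γc γe γp γl y z w)
    (hQ : Qinvᵀ = Qinv) (hγc : 0 ≤ γc) (hγl : 0 ≤ γl) :
    AntitoneOn (errorEnergy y z w) (Ici 0) := by
  refine antitoneOn_of_hasDerivWithinAt_nonpos (convex_Ici 0) (f' := fun t =>
      -(2 * γc * ((Bᵀ *ᵥ y t) ⬝ᵥ (Bᵀ *ᵥ y t)) + 2 * γl * ((Bcᵀ *ᵥ z t) ⬝ᵥ (Bcᵀ *ᵥ z t))))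
    (fun t ht => (h.hasDerivAt_errorEnergy hQ t ht).continuousAt.continuousWithinAt)
    (fun t ht => ?_) (fun t _ => ?_)
  · rw [interior_Ici] at ht ⊢
    exact (h.hasDerivAt_errorEnergy hQ t (le_of_lt ht)).hasDerivWithinAt
  · have := dotProduct_self_nonneg (Bᵀ *ᵥ y t)
    have := dotProduct_self_nonneg (Bcᵀ *ᵥ z t)
    simp only [neg_nonpos]
    positivity

theorem mem_closedBall (h : IsErrorTrajectory B Bc Qinv γc γe γp γl y z w)
    (hQ : Qinvᵀ = Qinv) (hγc : 0 ≤ γc) (hγl : 0 ≤ γl) (t : ℝ) (ht : 0 ≤ t) :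
    (y t, z t, w t) ∈ Metric.closedBall 0 √(errorEnergy y z w 0) := by
  have hE : y t ⬝ᵥ y t + z t ⬝ᵥ z t + w t ⬝ᵥ w t ≤ errorEnergy y z w 0 :=
    h.antitoneOn_errorEnergy hQ hγc hγl self_mem_Ici ht ht
  have hbound {k : ℕ} (v : Fin k → ℝ) (hv : v ⬝ᵥ v ≤ errorEnergy y z w 0) :
      ‖v‖ ≤ √(errorEnergy y z w 0) :=
    (norm_le_sqrt_dotProduct_self v).trans (Real.sqrt_le_sqrt hv)
  have := dotProduct_self_nonneg (y t)
  have := dotProduct_self_nonneg (z t)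
  have := dotProduct_self_nonneg (w t)
  rw [mem_closedBall_zero_iff, norm_prod_le_iff, norm_prod_le_iff]
  refine ⟨hbound (y t) ?_, hbound (z t) ?_, hbound (w t) ?_⟩ <;> linarith

theorem uniformContinuousOn_comp (h : IsErrorTrajectory B Bc Qinv γc γe γp γl y z w)
    (hQ : Qinvᵀ = Qinv) (hγc : 0 ≤ γc) (hγl : 0 ≤ γl) {F : Type*} [UniformSpace F]
    {g : (Fin n → ℝ) × (Fin n → ℝ) × (Fin m → ℝ) → F} (hg : Continuous g) :
    UniformContinuousOn (fun t => g (y t, z t, w t)) (Ici 0) :=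
  uniformContinuousOn_comp_of_hasDerivAt (isCompact_closedBall 0 _)
    (h.mem_closedBall hQ hγc hγl)
    (Φ := fun v => (-(γc • ((B * Bᵀ) *ᵥ v.1)) - γe • (B *ᵥ v.2.2) + γp • (Qinv *ᵥ v.2.1),
      -(γl • ((Bc * Bcᵀ) *ᵥ v.2.1)) - γp • (Qinv *ᵥ v.1), γe • (Bᵀ *ᵥ v.1)))
    (by fun_prop)
    (fun t ht =>
      (h.hasDerivAt_y t ht).prodMk ((h.hasDerivAt_z t ht).prodMk (h.hasDerivAt_w t ht)))
    hg.continuousOn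

theorem tendsto_transpose_mulVec (h : IsErrorTrajectory B Bc Qinv γc γe γp γl y z w)
    (hQ : Qinvᵀ = Qinv) (hγc : 0 < γc) (hγl : 0 < γl) :
    Tendsto (fun t => Bᵀ *ᵥ y t) atTop (𝓝 0) ∧ Tendsto (fun t => Bcᵀ *ᵥ z t) atTop (𝓝 0) := by
  obtain ⟨E, hE⟩ := (h.antitoneOn_errorEnergy hQ hγc.le hγl.le).exists_tendsto_atTop (b := 0)
    fun t _ => by
      have := dotProduct_self_nonneg (y t)
      have := dotProduct_self_nonneg (z t)
      have := dotProduct_self_nonneg (w t)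
      unfold errorEnergy
      positivity
  set a := fun t => (Bᵀ *ᵥ y t) ⬝ᵥ (Bᵀ *ᵥ y t)
  set b := fun t => (Bcᵀ *ᵥ z t) ⬝ᵥ (Bcᵀ *ᵥ z t)
  have hdiss : Tendsto (fun t => 2 * γc * a t + 2 * γl * b t) atTop (𝓝 0) := by
    simpa using (tendsto_deriv_zero_of_uniformContinuousOn (h.hasDerivAt_errorEnergy hQ)
      (h.uniformContinuousOn_comp hQ hγc.le hγl.le (g := fun v =>
        -(2 * γc * ((Bᵀ *ᵥ v.1) ⬝ᵥ (Bᵀ *ᵥ v.1)) + 2 * γl * ((Bcᵀ *ᵥ v.2.1) ⬝ᵥ (Bcᵀ *ᵥ v.2.1))))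
        (by fun_prop)) hE).neg
  have ha : ∀ t, 0 ≤ 2 * γc * a t := fun t => by
    have := dotProduct_self_nonneg (Bᵀ *ᵥ y t)
    positivity
  have hb : ∀ t, 0 ≤ 2 * γl * b t := fun t => by
    have := dotProduct_self_nonneg (Bcᵀ *ᵥ z t)
    positivity
  have ha0 := squeeze_zero ha (fun t => le_add_of_nonneg_right (hb t)) hdiss
  have hb0 := squeeze_zero hb (fun t => le_add_of_nonneg_left (ha t)) hdiss
  refine ⟨tendsto_zero_of_tendsto_dotProduct_self ?_, tendsto_zero_of_tendsto_dotProduct_self ?_⟩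
  · simpa using (tendsto_const_smul_iff₀ (by positivity : 2 * γc ≠ 0)).1 (by simpa using ha0)
  · simpa using (tendsto_const_smul_iff₀ (by positivity : 2 * γl ≠ 0)).1 (by simpa using hb0)

theorem tendsto_y (h : IsErrorTrajectory B Bc Qinv γc γe γp γl y z w) (hQ : Qinvᵀ = Qinv)
    (hQ1 : Qinv *ᵥ onesVec n ∉ Submodule.span ℝ {onesVec n})
    (hB : LinearMap.ker Bᵀ.mulVecLin ≤ Submodule.span ℝ {onesVec n})
    (hBc : LinearMap.ker Bcᵀ.mulVecLin ≤ Submodule.span ℝ {onesVec n})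
    (hγc : 0 < γc) (hγp : γp ≠ 0) (hγl : 0 < γl) : Tendsto y atTop (𝓝 0) := by
  obtain ⟨hBy, hBcz⟩ := h.tendsto_transpose_mulVec hQ hγc hγl
  have hdz : Tendsto (fun t => Bcᵀ *ᵥ (-(γl • ((Bc * Bcᵀ) *ᵥ z t)) - γp • (Qinv *ᵥ y t)))
      atTop (𝓝 0) :=
    tendsto_deriv_zero_of_uniformContinuousOn
      (fun t ht => (h.hasDerivAt_z t ht).matrix_mulVec Bcᵀ)
      (h.uniformContinuousOn_comp hQ hγc.le hγl.le
        (g := fun v => Bcᵀ *ᵥ (-(γl • ((Bc * Bcᵀ) *ᵥ v.2.1)) - γp • (Qinv *ᵥ v.1)))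
        (by fun_prop)) hBcz
  have hQy : Tendsto (fun t => (Bcᵀ * Qinv) *ᵥ y t) atTop (𝓝 0) := by
    have hsplit : ∀ t, γp • ((Bcᵀ * Qinv) *ᵥ y t) = -(Bcᵀ *ᵥ (-(γl • ((Bc * Bcᵀ) *ᵥ z t))
        - γp • (Qinv *ᵥ y t))) - γl • ((Bcᵀ * Bc) *ᵥ (Bcᵀ *ᵥ z t)) := fun t => by
      simp only [mulVec_sub, mulVec_neg, mulVec_smul, mulVec_mulVec, Matrix.mul_assoc]
      abel
    rw [← tendsto_const_smul_iff₀ hγp, smul_zero]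
    simpa only [hsplit, neg_zero, smul_zero, sub_zero] using
      hdz.neg.sub ((tendsto_mulVec_zero _ hBcz).const_smul γl)
  have hdisj : Disjoint (LinearMap.ker Bᵀ.mulVecLin) (LinearMap.ker (Bcᵀ * Qinv).mulVecLin) :=
    LinearMap.disjoint_ker_of_ker_le_span hB fun h0 => hQ1 <| hBc <| by
      simpa [← mulVec_mulVec] using h0
  exact tendsto_zero_of_disjoint_ker hdisj hBy hQy

theorem tendsto_z (h : IsErrorTrajectory B Bc Qinv γc γe γp γl y z w) (hQ : Qinvᵀ = Qinv)
    (hQ1 : Qinv *ᵥ onesVec n ∉ Submodule.span ℝ {onesVec n})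
    (hQ2 : onesVec n ⬝ᵥ (Qinv *ᵥ onesVec n) ≠ 0)
    (hB : LinearMap.ker Bᵀ.mulVecLin = Submodule.span ℝ {onesVec n})
    (hBc : LinearMap.ker Bcᵀ.mulVecLin ≤ Submodule.span ℝ {onesVec n})
    (hγc : 0 < γc) (hγp : γp ≠ 0) (hγl : 0 < γl) : Tendsto z atTop (𝓝 0) := by
  have hy := h.tendsto_y hQ hQ1 hB.le hBc hγc hγp hγl
  have hdy : Tendsto (fun t => -(γc • ((B * Bᵀ) *ᵥ y t)) - γe • (B *ᵥ w t)
      + γp • (Qinv *ᵥ z t)) atTop (𝓝 0) :=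
    tendsto_deriv_zero_of_uniformContinuousOn h.hasDerivAt_y
      (h.uniformContinuousOn_comp hQ hγc.le hγl.le
        (g := fun v => -(γc • ((B * Bᵀ) *ᵥ v.1)) - γe • (B *ᵥ v.2.2) + γp • (Qinv *ᵥ v.2.1))
        (by fun_prop)) hy
  -- `𝟙ᵀ B = 0` kills every term of `ẏ` along `𝟙` except `γp 𝟙ᵀ Q⁻¹ z`
  have hB1 : Bᵀ *ᵥ onesVec n = 0 :=
    LinearMap.mem_ker.1 (hB ▸ Submodule.mem_span_singleton_self (onesVec n))
  have h1dy : ∀ t, onesVec n ⬝ᵥ (-(γc • ((B * Bᵀ) *ᵥ y t)) - γe • (B *ᵥ w t)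
      + γp • (Qinv *ᵥ z t)) = γp * (onesVec n ⬝ᵥ (Qinv *ᵥ z t)) := fun t => by
    simp [dotProduct_add, dotProduct_sub, dotProduct_neg, dotProduct_smul, ← mulVec_mulVec,
      dotProduct_mulVec_eq_transpose B, hB1]
  have hQz : Tendsto (fun t => onesVec n ⬝ᵥ (Qinv *ᵥ z t)) atTop (𝓝 0) := by
    rw [← tendsto_const_smul_iff₀ hγp, smul_zero]
    have hcont : Continuous fun v : Fin n → ℝ => onesVec n ⬝ᵥ v := by fun_prop
    simpa [Function.comp_def, h1dy] using (hcont.tendsto 0).comp hdy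
  have hdisj : Disjoint (LinearMap.ker Bcᵀ.mulVecLin)
      (LinearMap.ker (dotProductBilin ℝ ℝ (onesVec n) ∘ₗ Qinv.mulVecLin)) :=
    LinearMap.disjoint_ker_of_ker_le_span hBc (by simpa using hQ2)
  exact tendsto_zero_of_disjoint_ker hdisj (h.tendsto_transpose_mulVec hQ hγc hγl).2
    (by simpa using hQz)

end IsErrorTrajectory

theorem exists_steadyState {n m mc : ℕ} {B : Matrix (Fin n) (Fin m) ℝ}
    {Bc : Matrix (Fin n) (Fin mc) ℝ} {Qinv : Matrix (Fin n) (Fin n) ℝ} {γe γp : ℝ}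
    (d r xbars : Fin n → ℝ) (hB : LinearMap.ker Bᵀ.mulVecLin = Submodule.span ℝ {onesVec n})
    (hBc : Bcᵀ *ᵥ onesVec n = 0) (hQ : onesVec n ⬝ᵥ (Qinv *ᵥ onesVec n) ≠ 0) (hγe : γe ≠ 0)
    (hγp : γp ≠ 0) :
    ∃ xbp wb, (Bc * Bcᵀ) *ᵥ xbp = 0 ∧ γe • (B *ᵥ wb) = Qinv *ᵥ (γp • xbp - r) + d - xbars ∧
      Qinv *ᵥ (γp • xbp - r) = -(Qinv *ᵥ
        (((onesVec n ⬝ᵥ (Qinv *ᵥ onesVec n))⁻¹ • onesMat n) *ᵥ (d - xbars - Qinv *ᵥ r) + r)) := by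
  obtain ⟨β, hβ⟩ : ∃ β, (onesVec n ⬝ᵥ (Qinv *ᵥ onesVec n))⁻¹ *
      (onesVec n ⬝ᵥ (d - xbars - Qinv *ᵥ r)) = β := ⟨_, rfl⟩
  have hβκ : β * (onesVec n ⬝ᵥ (Qinv *ᵥ onesVec n)) =
      onesVec n ⬝ᵥ (d - xbars - Qinv *ᵥ r) := by
    rw [← hβ]
    field_simp
  have hγpxbp : γp • (-(β / γp) • onesVec n) = -(β • onesVec n) := by
    rw [smul_smul, mul_neg, mul_div_cancel₀ _ hγp, neg_smul]
  -- `range B = (ker Bᵀ)ᗮ = 𝟙ᗮ`, and `β` is chosen to make the forcing orthogonal to `𝟙`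
  have hsum : ∀ k, Bᵀ *ᵥ k = 0 →
      k ⬝ᵥ (γe⁻¹ • (Qinv *ᵥ (γp • (-(β / γp) • onesVec n) - r) + d - xbars)) = 0 := by
    intro k hk
    obtain ⟨a, rfl⟩ := Submodule.mem_span_singleton.1 (hB ▸ LinearMap.mem_ker.2 hk : k ∈ _)
    simp only [hγpxbp, smul_dotProduct, dotProduct_smul, dotProduct_add, dotProduct_sub,
      mulVec_sub, mulVec_neg, mulVec_smul, dotProduct_neg, smul_eq_mul] at hβκ ⊢
    linear_combination -(a * γe⁻¹) * hβκ
  obtain ⟨wb, hwb⟩ := B.exists_mulVec_eq_of_forall_dotProduct_eq_zero hsum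
  refine ⟨-(β / γp) • onesVec n, wb, ?_, ?_, ?_⟩
  · rw [← mulVec_mulVec, mulVec_smul, hBc, smul_zero, mulVec_zero]
  · rw [hwb, smul_smul, mul_inv_cancel₀ hγe, one_smul]
  · rw [hγpxbp, smul_mulVec, onesMat_mulVec, smul_smul, hβ, ← neg_add', mulVec_neg]

theorem isErrorTrajectory_sub_steadyState {n m mc : ℕ} {B : Matrix (Fin n) (Fin m) ℝ}
    {Bc : Matrix (Fin n) (Fin mc) ℝ} {Qinv : Matrix (Fin n) (Fin n) ℝ} {γc γe γp γl : ℝ}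
    {d r xbars : Fin n → ℝ} {xbar x xp : ℝ → Fin n → ℝ} {xe : ℝ → Fin m → ℝ}
    (hxbar : ∀ t, HasDerivAt xbar xbars t)
    (hx : ∀ t ≥ (0:ℝ), HasDerivAt x
      (-(γc • ((B * Bᵀ) *ᵥ (x t - xbar t))) - γe • (B *ᵥ xe t)
        + Qinv *ᵥ (γp • xp t - r) + d) t)
    (hxp : ∀ t ≥ (0:ℝ), HasDerivAt xp
      (-(γl • ((Bc * Bcᵀ) *ᵥ xp t)) - γp • (Qinv *ᵥ (x t - xbar t))) t)
    (hxe : ∀ t ≥ (0:ℝ), HasDerivAt xe (γe • (Bᵀ *ᵥ (x t - xbar t))) t)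
    {xbp : Fin n → ℝ} {wb : Fin m → ℝ} (hxbp : (Bc * Bcᵀ) *ᵥ xbp = 0)
    (hwb : γe • (B *ᵥ wb) = Qinv *ᵥ (γp • xbp - r) + d - xbars) :
    IsErrorTrajectory B Bc Qinv γc γe γp γl (fun t => x t - xbar t) (fun t => xp t - xbp)
      (fun t => xe t - wb) where
  hasDerivAt_y t ht := ((hx t ht).sub (hxbar t)).congr_deriv <| by
    simp only [mulVec_sub, mulVec_smul, smul_sub] at hwb ⊢
    linear_combination (norm := module) -hwb
  hasDerivAt_z t ht := ((hxp t ht).sub_const xbp).congr_deriv <| by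
    rw [mulVec_sub (Bc * Bcᵀ), hxbp, sub_zero]
  hasDerivAt_w t ht := (hxe t ht).sub_const wb

/-- Theorem 1: the unconstrained distributed controllers achieve
`x(t) − x̄(t) → 0` and `u_p(t) → ū_p` (the optimal steady-state input). -/
theorem theorem1_unconstrained_regulation {n m mc : ℕ}
    (q : Fin n → ℝ) (hq : ∀ i, 0 < q i)
    (hq2 : ∃ i j, q i ≠ q j)
    (B : Matrix (Fin n) (Fin m) ℝ)
    (hB : LinearMap.ker Bᵀ.mulVecLin = Submodule.span ℝ {onesVec n})
    (Bc : Matrix (Fin n) (Fin mc) ℝ)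
    (hBc : LinearMap.ker Bcᵀ.mulVecLin = Submodule.span ℝ {onesVec n})
    (Lc : Matrix (Fin n) (Fin n) ℝ) (hLc : Lc = Bc * Bcᵀ)
    (γc γe γp γl : ℝ) (hγc : 0 < γc) (hγe : 0 < γe) (hγp : 0 < γp) (hγl : 0 < γl)
    (d r xbar0 xbars : Fin n → ℝ)
    (xbar : ℝ → Fin n → ℝ) (hxbar : ∀ t, xbar t = xbar0 + t • xbars)
    (Qinv : Matrix (Fin n) (Fin n) ℝ)
    (hQinv : Qinv = Matrix.diagonal fun i => (q i)⁻¹)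
    (x xp : ℝ → Fin n → ℝ) (xe : ℝ → Fin m → ℝ)
    (hx : ∀ t ≥ (0:ℝ), HasDerivAt x
      (-(γc • ((B * Bᵀ) *ᵥ (x t - xbar t))) - γe • (B *ᵥ xe t)
        + Qinv *ᵥ (γp • xp t - r) + d) t)
    (hxp : ∀ t ≥ (0:ℝ), HasDerivAt xp
      (-(γl • (Lc *ᵥ xp t)) - γp • (Qinv *ᵥ (x t - xbar t))) t)
    (hxe : ∀ t ≥ (0:ℝ), HasDerivAt xe (γe • (Bᵀ *ᵥ (x t - xbar t))) t)
    (up : ℝ → Fin n → ℝ) (hup : ∀ t, up t = Qinv *ᵥ (γp • xp t - r))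
    (ubarp : Fin n → ℝ)
    (hubarp : ubarp = -(Qinv *ᵥ
      (((onesVec n ⬝ᵥ (Qinv *ᵥ onesVec n))⁻¹ • onesMat n) *ᵥ
        (d - xbars - Qinv *ᵥ r) + r))) :
    Tendsto (fun t => euclNorm (x t - xbar t)) atTop (nhds 0) ∧
    Tendsto (fun t => euclNorm (up t - ubarp)) atTop (nhds 0) := by
  obtain ⟨i, j, hij⟩ := hq2
  subst hLc
  have hQ : Qinvᵀ = Qinv := hQinv ▸ diagonal_transpose _
  have hQ1 : Qinv *ᵥ onesVec n ∉ Submodule.span ℝ {onesVec n} :=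
    hQinv ▸ notMem_span_onesVec (i := i) (j := j) (by simpa [mulVec_diagonal, onesVec] using hij)
  have hQ2 : 0 < onesVec n ⬝ᵥ (Qinv *ᵥ onesVec n) := by
    rw [hQinv, onesVec_dotProduct_diagonal_mulVec_onesVec]
    exact Finset.sum_pos (fun i _ => inv_pos.2 (hq i)) ⟨i, Finset.mem_univ i⟩
  have hBc1 : Bcᵀ *ᵥ onesVec n = 0 :=
    LinearMap.mem_ker.1 (hBc ▸ Submodule.mem_span_singleton_self (onesVec n))
  obtain ⟨xbp, wb, hxbp, hwb, hu⟩ :=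
    exists_steadyState d r xbars hB hBc1 hQ2.ne' hγe.ne' hγp.ne' (Bc := Bc)
  have hxbar' : ∀ t, HasDerivAt xbar xbars t := fun t => by
    rw [funext hxbar]
    simpa using ((hasDerivAt_id t).smul_const xbars).const_add xbar0
  have herr := isErrorTrajectory_sub_steadyState hxbar' hx hxp hxe hxbp hwb
  refine ⟨tendsto_euclNorm_zero (herr.tendsto_y hQ hQ1 hB.le hBc.le hγc hγp.ne' hγl), ?_⟩
  have hup' : ∀ t, up t - ubarp = γp • (Qinv *ᵥ (xp t - xbp)) := fun t => by
    rw [hup, hubarp, ← hu, ← mulVec_sub, ← mulVec_smul, smul_sub, sub_sub_sub_cancel_right]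
  simp_rw [hup']
  refine tendsto_euclNorm_zero ?_
  simpa using (tendsto_mulVec_zero Qinv
    (herr.tendsto_z hQ hQ1 hQ2.ne' hB hBc.le hγc hγp.ne' hγl)).const_smul γp
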